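/- arXiv:1302.4900 — 3 statements merged into one kernel-verified Lean document; each statement's English description precedes it below -/
import Mathlib

section
/- For any group G, the lattice of subgroups of G is distributive (i.e. H ⊓ (K ⊔ L) = (H ⊓ K) ⊔ (H ⊓ L) for all subgroups H, K, L of G) if and only if G is commutative and locally cyclic, i.e. for every finite subset S of G the subgroup generated by S is cyclic. -/
/-!
Distributivity applied to `⟨a⟩ ⊓ (⟨b⟩ ⊔ ⟨ab⟩)` puts `a` into `(⟨a⟩ ⊓ ⟨b⟩) ⊔ (⟨a⟩ ⊓ ⟨ab⟩)`. Both
terms centralise `b`, so `G` is abelian; and when `⟨a⟩ ⊓ ⟨b⟩ = ⊥` it gives `a ∈ ⟨ab⟩`, which forces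
the orders of `a` and `b` to be coprime. Coprimality excludes what could make a two-generator
subgroup non-cyclic: two independent elements of the same prime order, torsion next to an element
of infinite order, and two independent elements of infinite order.

Conversely, if `k = c ^ A` and `l = c ^ B`, then `x = k * l` is a product of powers of
`x ^ (A / d)` and `x ^ (B / d)` with `d = gcd A B`, and these are powers of `k` and of `l`.
-/

open Subgroup

section Group

variable {G : Type*} [Group G]

theorem mem_zpowers_inf_sup_zpowers_inf_mul
    (hdist : ∀ H K L : Subgroup G, H ⊓ (K ⊔ L) = H ⊓ K ⊔ H ⊓ L) (a b : G) :
    a ∈ zpowers a ⊓ zpowers b ⊔ zpowers a ⊓ zpowers (a * b) := by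
  have hab : a ∈ zpowers b ⊔ zpowers (a * b) := by
    simpa using
      mul_mem (mem_sup_right (mem_zpowers (a * b))) (inv_mem (mem_sup_left (mem_zpowers b)))
  rw [← hdist]
  exact ⟨mem_zpowers a, hab⟩

theorem commute_of_subgroup_inf_sup_eq
    (hdist : ∀ H K L : Subgroup G, H ⊓ (K ⊔ L) = H ⊓ K ⊔ H ⊓ L) (a b : G) : Commute a b := by
  suffices zpowers a ⊓ zpowers b ⊔ zpowers a ⊓ zpowers (a * b) ≤ centralizer {b} by
    exact mem_centralizer_singleton_iff.mp (this (mem_zpowers_inf_sup_zpowers_inf_mul hdist a b))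
  refine sup_le (fun x hx => ?_) (fun x hx => ?_)
  · obtain ⟨i, rfl⟩ := mem_zpowers_iff.mp (mem_inf.mp hx).2
    exact mem_centralizer_singleton_iff.mpr (Commute.zpow_self b i)
  · obtain ⟨i, rfl⟩ := mem_zpowers_iff.mp (mem_inf.mp hx).1
    obtain ⟨j, hj⟩ := mem_zpowers_iff.mp (mem_inf.mp hx).2
    have h1 : Commute (a ^ i) a := Commute.zpow_self a i
    have h2 : Commute (a ^ i) (a * b) := hj ▸ Commute.zpow_self (a * b) j
    have := h1.inv_right.mul_right h2
    rw [inv_mul_cancel_left] at this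
    exact mem_centralizer_singleton_iff.mpr this

theorem mul_mem_zpowers_inf_sup_zpowers_inf {c k l : G} (hk : k ∈ zpowers c)
    (hl : l ∈ zpowers c) :
    k * l ∈ zpowers (k * l) ⊓ zpowers k ⊔ zpowers (k * l) ⊓ zpowers l := by
  obtain ⟨A, rfl⟩ := mem_zpowers_iff.mp hk
  obtain ⟨B, rfl⟩ := mem_zpowers_iff.mp hl
  set x := c ^ A * c ^ B
  obtain hAB | hAB := (Int.gcd A B).eq_zero_or_pos
  · obtain ⟨rfl, rfl⟩ := Int.gcd_eq_zero_iff.mp hAB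
    simp [x]
  obtain ⟨d, A', B', -, hcop, rfl, rfl⟩ := Int.exists_gcd_one' hAB
  obtain ⟨r, s, hrs⟩ := Int.isCoprime_iff_gcd_eq_one.mpr hcop
  have hA : x ^ A' = (c ^ (A' * d)) ^ (A' + B') := by
    simp only [x, ← zpow_add, ← zpow_mul]; ring_nf
  have hB : x ^ B' = (c ^ (B' * d)) ^ (A' + B') := by
    simp only [x, ← zpow_add, ← zpow_mul]; ring_nf
  have hx : x = (x ^ A') ^ r * (x ^ B') ^ s := by
    rw [← zpow_mul, ← zpow_mul, ← zpow_add, mul_comm A', mul_comm B', hrs, zpow_one]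
  have hxA : x ^ A' ∈ zpowers x ⊓ zpowers (c ^ (A' * d)) :=
    ⟨zpow_mem (mem_zpowers x) _, hA ▸ zpow_mem (mem_zpowers _) _⟩
  have hxB : x ^ B' ∈ zpowers x ⊓ zpowers (c ^ (B' * d)) :=
    ⟨zpow_mem (mem_zpowers x) _, hB ▸ zpow_mem (mem_zpowers _) _⟩
  simpa only [← hx] using
    mul_mem (mem_sup_left (zpow_mem hxA r)) (mem_sup_right (zpow_mem hxB s))

theorem closure_pair_eq_zpowers {a b c : G} (ha : a ∈ zpowers c) (hb : b ∈ zpowers c)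
    (hc : c ∈ closure {a, b}) : closure {a, b} = zpowers c :=
  le_antisymm
    ((closure_le _).mpr (Set.insert_subset_iff.mpr ⟨ha, Set.singleton_subset_iff.mpr hb⟩))
    (zpowers_le.mpr hc)

theorem exists_closure_eq_zpowers_of_finite
    (hpair : ∀ a b : G, ∃ c, closure {a, b} = zpowers c) {S : Set G} (hS : S.Finite) :
    ∃ c, closure S = zpowers c := by
  induction S, hS using Set.Finite.induction_on with
  | empty => exact ⟨1, by simp⟩
  | @insert x s _ _ ih =>
    obtain ⟨c, hc⟩ := ih
    obtain ⟨c', hc'⟩ := hpair x c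
    refine ⟨c', ?_⟩
    rw [Set.insert_eq, Subgroup.closure_union, hc, zpowers_eq_closure, ← Subgroup.closure_union,
      ← Set.insert_eq, hc']


end Group

section CommGroup

variable {G : Type*} [CommGroup G]

theorem coprime_orderOf_of_zpowers_inf_eq_bot
    (hdist : ∀ H K L : Subgroup G, H ⊓ (K ⊔ L) = H ⊓ K ⊔ H ⊓ L) {a b : G}
    (h : zpowers a ⊓ zpowers b = ⊥) : (orderOf a).Coprime (orderOf b) := by
  have ha := mem_zpowers_inf_sup_zpowers_inf_mul hdist a b
  rw [h, bot_sup_eq] at ha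
  obtain ⟨k, hk⟩ := mem_zpowers_iff.mp (mem_inf.mp ha).2
  have hbk : b ^ k = a ^ (1 - k) := by
    calc b ^ k = (a * b) ^ k * (a ^ k)⁻¹ := by rw [mul_zpow, mul_inv_cancel_comm]
      _ = a ^ (1 - k) := by rw [hk, zpow_sub, zpow_one]
  have hb1 : b ^ k = 1 :=
    (eq_bot_iff_forall _).mp h _ ⟨hbk ▸ zpow_mem (mem_zpowers a) _, zpow_mem (mem_zpowers b) k⟩
  obtain ⟨s, hs⟩ := orderOf_dvd_iff_zpow_eq_one.mpr (hbk ▸ hb1 : a ^ (1 - k) = 1)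
  obtain ⟨t, ht⟩ := orderOf_dvd_iff_zpow_eq_one.mpr hb1
  exact Nat.isCoprime_iff_coprime.mp ⟨s, t, by linarith⟩

theorem isMulTorsionFree_of_orderOf_eq_zero
    (hcop : ∀ a b : G, zpowers a ⊓ zpowers b = ⊥ → (orderOf a).Coprime (orderOf b)) {a : G}
    (ha : orderOf a = 0) : IsMulTorsionFree G := by
  refine isMulTorsionFree_iff_not_isOfFinOrder.mpr fun z hz1 hz => hz1 ?_
  have hbot : zpowers a ⊓ zpowers z = ⊥ := by
    refine (eq_bot_iff_forall _).mpr fun w hw => ?_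
    obtain ⟨i, rfl⟩ := mem_zpowers_iff.mp (mem_inf.mp hw).1
    obtain ⟨n, hn, hwn⟩ := isOfFinOrder_iff_zpow_eq_one.mp (hz.of_mem_zpowers (mem_inf.mp hw).2)
    have hin : i * n = 0 := by
      simpa [ha] using orderOf_dvd_iff_zpow_eq_one.mpr (show a ^ (i * n) = 1 by rwa [zpow_mul])
    simp [(mul_eq_zero.mp hin).resolve_right hn]
  simpa [ha] using hcop a z hbot

theorem mem_zpowers_of_orderOf_eq_prime
    (hcop : ∀ a b : G, zpowers a ⊓ zpowers b = ⊥ → (orderOf a).Coprime (orderOf b)) {p : ℕ}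
    (hp : p.Prime) {x y : G} (hx : orderOf x = p) (hy : orderOf y = p) : x ∈ zpowers y := by
  have hK : zpowers x ⊓ zpowers y ≠ ⊥ := fun h => hp.ne_one (by simpa [hx, hy] using hcop x y h)
  have hcard : Nat.card (zpowers x ⊓ zpowers y : Subgroup G) = p := by
    have := card_dvd_of_le (inf_le_left : zpowers x ⊓ zpowers y ≤ zpowers x)
    rw [Nat.card_zpowers, hx] at this
    exact (hp.eq_one_or_self_of_dvd _ this).resolve_left (mt card_eq_one.mp hK)
  have : Finite (zpowers x) :=
    Nat.finite_of_card_ne_zero (by rw [Nat.card_zpowers, hx]; exact hp.ne_zero)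
  have hKx : zpowers x ⊓ zpowers y = zpowers x :=
    eq_of_le_of_card_ge inf_le_left (by rw [hcard, Nat.card_zpowers, hx])
  exact (hKx ▸ inf_le_right : zpowers x ≤ zpowers y) (mem_zpowers x)

theorem mem_zpowers_of_orderOf_dvd
    (hcop : ∀ a b : G, zpowers a ⊓ zpowers b = ⊥ → (orderOf a).Coprime (orderOf b)) {g : G}
    (hg : orderOf g ≠ 0) {x : G} (hx : orderOf x ∣ orderOf g) : x ∈ zpowers g := by
  induction hox : orderOf x using Nat.strong_induction_on generalizing x with
  | _ o ih =>
  obtain rfl | ho1 := eq_or_ne o 1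
  · exact orderOf_eq_one_iff.mp hox ▸ one_mem _
  obtain ⟨p, hp, q, rfl⟩ := Nat.exists_prime_and_dvd ho1
  obtain ⟨m, hm⟩ := hox ▸ hx
  have hqm : q * m ≠ 0 := by rintro h; apply hg; rw [hm, mul_assoc, h, mul_zero]
  have hxq : orderOf (x ^ q) = p := by
    rw [orderOf_pow_of_dvd (left_ne_zero_of_mul hqm) (hox ▸ Dvd.intro_left p rfl), hox,
      Nat.mul_div_cancel _ (Nat.pos_of_ne_zero (left_ne_zero_of_mul hqm))]
  have hgq : orderOf (g ^ (q * m)) = p := by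
    rw [orderOf_pow_of_dvd hqm ⟨p, by rw [hm]; ring⟩, hm, mul_assoc,
      Nat.mul_div_cancel _ (Nat.pos_of_ne_zero hqm)]
  obtain ⟨w, hw⟩ := mem_zpowers_iff.mp (mem_zpowers_of_orderOf_eq_prime hcop hp hxq hgq)
  -- dividing `x` by the power of `g` with the same `q`-th power leaves an element of order `∣ q`
  set y := x * g ^ (-(m * w))
  have hyq : y ^ q = 1 := by
    rw [← zpow_natCast, mul_zpow, zpow_natCast, ← hw, ← zpow_natCast, ← zpow_mul, ← zpow_mul,
      ← zpow_add]
    push_cast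
    ring_nf
    exact zpow_zero g
  have hyo : orderOf y < p * q := by
    have hq0 : 0 < q := Nat.pos_of_ne_zero (left_ne_zero_of_mul hqm)
    exact (Nat.le_of_dvd hq0 (orderOf_dvd_of_pow_eq_one hyq)).trans_lt
      (lt_mul_left hq0 hp.one_lt)
  have hy : y ∈ zpowers g :=
    ih _ hyo ((orderOf_dvd_of_pow_eq_one hyq).trans ⟨p * m, by rw [hm]; ring⟩) rfl
  simpa [y] using mul_mem hy (zpow_mem (mem_zpowers g) (m * w))

theorem exists_closure_pair_eq_zpowers_of_orderOf_ne_zero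
    (hcop : ∀ a b : G, zpowers a ⊓ zpowers b = ⊥ → (orderOf a).Coprime (orderOf b)) {a b : G}
    (ha : orderOf a ≠ 0) (hb : orderOf b ≠ 0) : ∃ c, closure {a, b} = zpowers c := by
  obtain ⟨c, hc, hco⟩ := (Commute.all a b).exists_orderOf_eq_lcm
  have hc0 : orderOf c ≠ 0 := hco ▸ Nat.lcm_ne_zero ha hb
  exact ⟨c, closure_pair_eq_zpowers
    (mem_zpowers_of_orderOf_dvd hcop hc0 (hco ▸ Nat.dvd_lcm_left _ _))
    (mem_zpowers_of_orderOf_dvd hcop hc0 (hco ▸ Nat.dvd_lcm_right _ _))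
    (Submonoid.closure_le.mpr subset_closure hc)⟩

theorem exists_closure_pair_eq_zpowers_of_zpow_eq [IsMulTorsionFree G] {a b : G} {m n : ℤ}
    (hn : n ≠ 0) (h : b ^ n = a ^ m) : ∃ c, closure {a, b} = zpowers c := by
  obtain ⟨d, n', m', -, hnm, rfl, rfl⟩ := Int.exists_gcd_one' (Int.gcd_pos_of_ne_zero_left m hn)
  obtain ⟨r, s, hrs⟩ := Int.isCoprime_iff_gcd_eq_one.mpr hnm
  set c := a ^ r * b ^ s
  have hcn : c ^ (n' * d) = a ^ (d : ℤ) := by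
    rw [mul_zpow, ← zpow_mul, ← zpow_mul, mul_comm s, zpow_mul b, h, ← zpow_mul, ← zpow_add]
    congr 1
    linear_combination (d : ℤ) * hrs
  have hca : (c ^ n') ^ (n' * d) = a ^ (n' * d) := by
    rw [← zpow_mul, mul_comm, zpow_mul, hcn, ← zpow_mul, mul_comm]
  have hcb : (c ^ m') ^ (n' * d) = b ^ (n' * d) := by
    rw [← zpow_mul, mul_comm, zpow_mul, hcn, ← zpow_mul, mul_comm, h]
  refine ⟨c, closure_pair_eq_zpowers ?_ ?_ ?_⟩
  · exact zpow_left_injective hn hca ▸ zpow_mem (mem_zpowers c) n'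
  · exact zpow_left_injective hn hcb ▸ zpow_mem (mem_zpowers c) m'
  · exact mul_mem (zpow_mem (subset_closure (by simp)) r) (zpow_mem (subset_closure (by simp)) s)

theorem exists_closure_pair_eq_zpowers_of_orderOf_eq_zero
    (hcop : ∀ a b : G, zpowers a ⊓ zpowers b = ⊥ → (orderOf a).Coprime (orderOf b)) {a : G}
    (ha : orderOf a = 0) (b : G) : ∃ c, closure {a, b} = zpowers c := by
  have := isMulTorsionFree_of_orderOf_eq_zero hcop ha
  obtain hbot | ⟨w, hw, hw1⟩ := (zpowers a ⊓ zpowers b).bot_or_exists_ne_one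
  · have hb : b = 1 := orderOf_eq_one_iff.mp (by simpa [ha] using hcop a b hbot)
    exact ⟨a, closure_pair_eq_zpowers (mem_zpowers a) (hb ▸ one_mem _) (subset_closure (by simp))⟩
  · obtain ⟨m, rfl⟩ := mem_zpowers_iff.mp (mem_inf.mp hw).1
    obtain ⟨n, hn⟩ := mem_zpowers_iff.mp (mem_inf.mp hw).2
    exact exists_closure_pair_eq_zpowers_of_zpow_eq
      (by rintro rfl; exact hw1 (by rw [← hn, zpow_zero])) hn

theorem exists_closure_pair_eq_zpowers
    (hcop : ∀ a b : G, zpowers a ⊓ zpowers b = ⊥ → (orderOf a).Coprime (orderOf b)) (a b : G) :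
    ∃ c, closure {a, b} = zpowers c := by
  by_cases ha : orderOf a = 0
  · exact exists_closure_pair_eq_zpowers_of_orderOf_eq_zero hcop ha b
  by_cases hb : orderOf b = 0
  · simpa only [Set.pair_comm] using exists_closure_pair_eq_zpowers_of_orderOf_eq_zero hcop hb a
  exact exists_closure_pair_eq_zpowers_of_orderOf_ne_zero hcop ha hb

end CommGroup

/-- Ore's theorem: the subgroup lattice of a group `G` is distributive if and only if `G` is
commutative and locally cyclic (every finitely generated subgroup is cyclic). -/
theorem subgroup_lattice_distributive_iff {G : Type*} [Group G] :
    (∀ H K L : Subgroup G, H ⊓ (K ⊔ L) = (H ⊓ K) ⊔ (H ⊓ L)) ↔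
    ((∀ a b : G, a * b = b * a) ∧
      ∀ S : Set G, S.Finite → IsCyclic (Subgroup.closure S)) := by
  constructor
  · intro hdist
    have hcomm : ∀ a b : G, a * b = b * a := fun a b => commute_of_subgroup_inf_sup_eq hdist a b
    let : CommGroup G := { mul_comm := hcomm }
    refine ⟨hcomm, fun S hS => ?_⟩
    obtain ⟨c, hc⟩ := exists_closure_eq_zpowers_of_finite
      (exists_closure_pair_eq_zpowers fun a b => coprime_orderOf_of_zpowers_inf_eq_bot hdist) hS
    exact hc ▸ inferInstance
  · rintro ⟨hcomm, hcyc⟩ H K L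
    let : CommGroup G := { mul_comm := hcomm }
    refine le_antisymm (fun x hx => ?_) le_inf_sup
    obtain ⟨k, hk, l, hl, rfl⟩ := mem_sup.mp (mem_inf.mp hx).2
    obtain ⟨c, hc⟩ := (closure {k, l}).isCyclic_iff_exists_zpowers_eq_top.mp
      (hcyc _ (Set.toFinite _))
    have hkl := mul_mem_zpowers_inf_sup_zpowers_inf (hc ▸ subset_closure (by simp) : k ∈ zpowers c)
      (hc ▸ subset_closure (by simp) : l ∈ zpowers c)
    exact sup_le_sup (inf_le_inf (zpowers_le.mpr (mem_inf.mp hx).1) (zpowers_le.mpr hk))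
      (inf_le_inf (zpowers_le.mpr (mem_inf.mp hx).1) (zpowers_le.mpr hl)) hkl
end

section
/- Let C be a groupoid and let S be a set of morphisms of C (a subset of the sigma type Σ (x y : C), x ⟶ y). Then the following are equivalent: (i) S is closed under inverses (if ⟨x, y, f⟩ ∈ S then ⟨y, x, f⁻¹⟩ ∈ S) and S equals its relational square, i.e. S = { ⟨x, z, f ≫ g⟩ | ⟨x, y, f⟩ ∈ S and ⟨y, z, g⟩ ∈ S }; (ii) there exists a subgroupoid B of C (a family of sets of arrows closed under composition and inverses) such that S = { ⟨x, y, f⟩ | f ∈ B.arrows x y }. -/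
/-!
A subgroupoid is closed under composition, and every arrow `f : x ⟶ y` of it factors inside it
as `f ≫ 𝟙 y`, so its arrow set is its own relational square. Conversely, a set of arrows closed
under inverses that contains its relational square is closed under composition, hence is the
arrow set of a subgroupoid.
-/

open CategoryTheory

namespace CategoryTheory

variable {C : Type*} [Groupoid C]

def relComp (S T : Set (Σ x y : C, x ⟶ y)) : Set (Σ x y : C, x ⟶ y) :=
  {t | ∃ (x y z : C) (f : x ⟶ y) (g : y ⟶ z),
    (⟨x, y, f⟩ : Σ x y : C, x ⟶ y) ∈ S ∧ (⟨y, z, g⟩ : Σ x y : C, x ⟶ y) ∈ T ∧ t = ⟨x, z, f ≫ g⟩}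

namespace Subgroupoid

def arrowSet (B : Subgroupoid C) : Set (Σ x y : C, x ⟶ y) :=
  {t | t.2.2 ∈ B.arrows t.1 t.2.1}

theorem relComp_arrowSet_self (B : Subgroupoid C) :
    relComp B.arrowSet B.arrowSet = B.arrowSet := by
  ext t
  constructor
  · rintro ⟨x, y, z, f, g, hf, hg, rfl⟩
    exact B.mul hf hg
  · intro ht
    exact ⟨t.1, t.2.1, t.2.1, t.2.2, 𝟙 _, ht, B.id_mem_of_tgt ht, by simp⟩

def ofArrowSet (S : Set (Σ x y : C, x ⟶ y))
    (inv_mem : ∀ (x y : C) (f : x ⟶ y),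
      (⟨x, y, f⟩ : Σ x y : C, x ⟶ y) ∈ S → (⟨y, x, Groupoid.inv f⟩ : Σ x y : C, x ⟶ y) ∈ S)
    (relComp_subset : relComp S S ⊆ S) : Subgroupoid C where
  arrows x y := {f | (⟨x, y, f⟩ : Σ x y : C, x ⟶ y) ∈ S}
  inv hf := inv_mem _ _ _ hf
  mul hf _ hg := relComp_subset ⟨_, _, _, _, _, hf, hg, rfl⟩

theorem arrowSet_ofArrowSet (S : Set (Σ x y : C, x ⟶ y))
    (inv_mem : ∀ (x y : C) (f : x ⟶ y),
      (⟨x, y, f⟩ : Σ x y : C, x ⟶ y) ∈ S → (⟨y, x, Groupoid.inv f⟩ : Σ x y : C, x ⟶ y) ∈ S)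
    (relComp_subset : relComp S S ⊆ S) :
    (ofArrowSet S inv_mem relComp_subset).arrowSet = S :=
  rfl

end Subgroupoid

end CategoryTheory

/-- A set `S` of morphisms of a groupoid `C` is closed under inverses and equal to its
relational square (i.e. `S` is a projection of the induced Frobenius algebra in `Rel`)
if and only if `S` is the set of arrows of a subgroupoid of `C`. -/
theorem projection_iff_subgroupoid {C : Type*} [Groupoid C]
    (S : Set (Σ (x y : C), x ⟶ y)) :
    ((∀ (x y : C) (f : x ⟶ y),
        (⟨x, y, f⟩ : Σ (x y : C), x ⟶ y) ∈ S → (⟨y, x, Groupoid.inv f⟩ : Σ (x y : C), x ⟶ y) ∈ S) ∧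
      S = {t : Σ (x y : C), x ⟶ y |
        ∃ (x y z : C) (f : x ⟶ y) (g : y ⟶ z),
          (⟨x, y, f⟩ : Σ (x y : C), x ⟶ y) ∈ S ∧ (⟨y, z, g⟩ : Σ (x y : C), x ⟶ y) ∈ S ∧
            t = ⟨x, z, f ≫ g⟩}) ↔
    (∃ B : Subgroupoid C, S = {t : Σ (x y : C), x ⟶ y | t.2.2 ∈ B.arrows t.1 t.2.1}) := by
  constructor
  · rintro ⟨inv_mem, eq_relComp⟩
    have relComp_subset : relComp S S ⊆ S := eq_relComp.symm.subset
    exact ⟨Subgroupoid.ofArrowSet S inv_mem relComp_subset,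
      (Subgroupoid.arrowSet_ofArrowSet S inv_mem relComp_subset).symm⟩
  · rintro ⟨B, rfl⟩
    exact ⟨fun _ _ _ hf => B.inv hf, (Subgroupoid.relComp_arrowSet_self B).symm⟩
end

section
/- Let C be the groupoid whose objects are the two elements of Bool and which has exactly one morphism between any ordered pair of objects (the indiscrete groupoid on a two-element set). Then: (i) the lattice of subgroupoids of C is distributive, i.e. A ⊓ (B ⊔ D) = (A ⊓ B) ⊔ (A ⊓ D) for all subgroupoids A, B, D; and (ii) C is not commutative as an algebra in Rel: there exist objects x ≠ y and morphisms f : x ⟶ y, g : y ⟶ x such that the composites f ≫ g and g ≫ f are distinct elements of the sigma type Σ (a b : C), a ⟶ b (they are endomorphisms of different objects). -/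
/-!
In a thin groupoid with at most two objects the union of two subgroupoids is already closed under
composition: of the three objects `a, b, c` of a composite `f ≫ g` two coincide, so `f ≫ g` is
parallel to `f`, to `g`, or to the loop `f ≫ f⁻¹`. Hence joins of subgroupoids are unions of arrow
sets, meets are intersections, and distributivity is that of sets. Noncommutativity is witnessed by
`false ⟶ true ⟶ false`, whose two composites are loops at different objects.
-/

open CategoryTheory

/-- The indiscrete groupoid on a type: exactly one morphism between any two objects. -/
def Indiscrete (α : Type*) : Type _ := α

instance {α : Type*} : Groupoid (Indiscrete α) where
  Hom _ _ := Unit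
  id _ := ⟨⟩
  comp _ _ := ⟨⟩
  inv _ := ⟨⟩

instance {α : Type*} : Quiver.IsThin (Indiscrete α) := fun _ _ => inferInstanceAs (Subsingleton Unit)

namespace CategoryTheory.Subgroupoid

variable {C : Type*} [Groupoid C] [Quiver.IsThin C]

theorem mem_arrows_of_mem {S : Subgroupoid C} {c d : C} {f : c ⟶ d} (g : c ⟶ d)
    (hf : f ∈ S.arrows c d) : g ∈ S.arrows c d :=
  Subsingleton.elim f g ▸ hf

theorem comp_mem_union_of_two_objects (h2 : ∀ a b c : C, a = b ∨ b = c ∨ a = c)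
    {S T : Subgroupoid C} {a b c : C} {f : a ⟶ b} {g : b ⟶ c}
    (hf : f ∈ S.arrows a b) (hg : g ∈ T.arrows b c) :
    f ≫ g ∈ S.arrows a c ∪ T.arrows a c := by
  rcases h2 a b c with rfl | rfl | rfl
  · exact Or.inr (mem_arrows_of_mem _ hg)
  · exact Or.inl (mem_arrows_of_mem _ hf)
  · exact Or.inl (mem_arrows_of_mem _ (S.mul hf (S.inv hf)))

def union (h2 : ∀ a b c : C, a = b ∨ b = c ∨ a = c) (S T : Subgroupoid C) : Subgroupoid C where
  arrows c d := S.arrows c d ∪ T.arrows c d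
  inv hf := hf.imp S.inv T.inv
  mul := by
    rintro a b c f (hfS | hfT) g (hgS | hgT)
    · exact Or.inl (S.mul hfS hgS)
    · exact comp_mem_union_of_two_objects h2 hfS hgT
    · exact (Set.union_comm _ _).subset (comp_mem_union_of_two_objects h2 hfT hgS)
    · exact Or.inr (T.mul hfT hgT)

theorem sup_arrows_of_two_objects (h2 : ∀ a b c : C, a = b ∨ b = c ∨ a = c)
    (S T : Subgroupoid C) (c d : C) :
    (S ⊔ T).arrows c d = S.arrows c d ∪ T.arrows c d := by
  refine le_antisymm ?_ (Set.union_subset ?_ ?_)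
  · exact (le_iff _ (union h2 S T)).mp (sup_le (fun _ => Or.inl) fun _ => Or.inr)
  · exact (le_iff _ _).mp le_sup_left
  · exact (le_iff _ _).mp le_sup_right

theorem inf_sup_left_of_two_objects (h2 : ∀ a b c : C, a = b ∨ b = c ∨ a = c)
    (R S T : Subgroupoid C) : R ⊓ (S ⊔ T) = R ⊓ S ⊔ R ⊓ T := by
  ext c d f
  change f ∈ R.arrows c d ∩ (S ⊔ T).arrows c d ↔ f ∈ (R ⊓ S ⊔ R ⊓ T).arrows c d
  rw [sup_arrows_of_two_objects h2, sup_arrows_of_two_objects h2]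
  exact Set.ext_iff.mp (Set.inter_union_distrib_left _ _ _) f

end CategoryTheory.Subgroupoid

/-- For the indiscrete groupoid `C` on the two-element set `Bool`, the lattice of
subgroupoids of `C` is distributive, yet `C` is noncommutative as an algebra in `Rel`:
there are morphisms `f : x ⟶ y`, `g : y ⟶ x` with `x ≠ y` whose two composites
`f ≫ g` and `g ≫ f` are distinct elements of the type of morphisms of `C`. -/
theorem indiscrete_bool_distributive_not_commutative :
    (∀ A B D : Subgroupoid (Indiscrete Bool), A ⊓ (B ⊔ D) = (A ⊓ B) ⊔ (A ⊓ D)) ∧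
    (∃ (x y : Indiscrete Bool) (f : x ⟶ y) (g : y ⟶ x), x ≠ y ∧
      (⟨x, x, f ≫ g⟩ : Σ (a b : Indiscrete Bool), a ⟶ b) ≠ ⟨y, y, g ≫ f⟩) := by
  have two_objects : ∀ a b c : Bool, a = b ∨ b = c ∨ a = c := by decide
  exact ⟨Subgroupoid.inf_sup_left_of_two_objects two_objects, false, true, ⟨⟩, ⟨⟩,
    Bool.false_ne_true, fun h => Bool.false_ne_true (congrArg Sigma.fst h)⟩
end
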